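/- arXiv:1812.02480 — 2 statements merged into one kernel-verified Lean document; each statement's English description precedes it below -/
import Mathlib

section
/- Let γ, ζ : [0,1] → T be loops at 1⁻ that are homotopic relative to endpoints, let n ∈ ℕ, and let δ_γ, δ_ζ : [0,∞) → T be continuous maps with δ_γ(0) = δ_ζ(0) = 1⁻, f^n ∘ δ_γ = γ* and f^n ∘ δ_ζ = ζ*. Then for every k ∈ ℕ, δ_γ(k) = δ_ζ(k), and the paths δ_γ|_{[0,k]} and δ_ζ|_{[0,k]} are homotopic relative to endpoints. -/
open scoped Real NNReal

/-- The exponential covering map `e : ℝ → S¹`, `e t = exp (2 π i t)`. -/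
noncomputable def eMap (t : ℝ) : Circle := Circle.exp (2 * Real.pi * t)

/-- The `r`-torus `T = (S¹)^r`. -/
abbrev Torus (r : ℕ) := Fin r → Circle

/-- The point `1⁻ = (1,…,1)` of the torus. -/
noncomputable def onePt (r : ℕ) : Torus r := fun _ => 1

/-- The map `f(z₁,…,z_r) = (z₁^{m₁},…,z_r^{m_r})` on the torus. -/
noncomputable def fPow {r : ℕ} (m : Fin r → ℕ) (z : Torus r) : Torus r := fun i => z i ^ m i

/-- `γ* : [0,∞) → T`, defined by `γ*(t) = γ(t-k+1)` for `t ∈ [k-1,k]`. -/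
noncomputable def loopExt {r : ℕ} (γ : Path (onePt r) (onePt r)) (t : ℝ≥0) : Torus r :=
  γ ⟨Int.fract (t : ℝ), (Int.fract_nonneg _), (Int.fract_lt_one _).le⟩

/-- The standard loop `λ_s(t) = e(st)` in the circle. -/
noncomputable def lam (s : ℤ) : Path (1 : Circle) 1 where
  toFun t := eMap (s * t)
  continuous_toFun := by
    exact Circle.exp.continuous.comp (by fun_prop)
  source' := by simp [eMap]
  target' := by
    simp only [eMap, Set.Icc.coe_one, mul_one]
    rw [show (2 * Real.pi * (s:ℝ)) = (s:ℝ) * (2 * Real.pi) by ring]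
    exact Circle.exp_int_mul_two_pi s

/-- The `m`-adic solenoid, as the inverse limit of circles under `z ↦ z^m`. -/
def Solenoid (m : ℕ) : Type := {x : ℕ → Circle // ∀ n, (x (n + 1)) ^ m = x n}

noncomputable instance (m : ℕ) : TopologicalSpace (Solenoid m) :=
  instTopologicalSpaceSubtype

/-- The product `Σ = Σ_{m₁} × ⋯ × Σ_{m_r}` identified with the inverse limit of `(T, f)`. -/
def SigmaProd {r : ℕ} (m : Fin r → ℕ) : Type :=
  {x : ℕ → Torus r // ∀ n, fPow m (x (n + 1)) = x n}

noncomputable instance {r : ℕ} (m : Fin r → ℕ) : TopologicalSpace (SigmaProd m) :=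
  instTopologicalSpaceSubtype

/-- The `n`-th coordinate projection `π_n : Σ → T`. -/
def piProj {r : ℕ} (m : Fin r → ℕ) (n : ℕ) (x : SigmaProd m) : Torus r := x.1 n

/-- The projection `η_i : Σ → Σ_{m_i}`. -/
def eta {r : ℕ} (m : Fin r → ℕ) (i : Fin r) (x : SigmaProd m) : Solenoid (m i) :=
  ⟨fun n => x.1 n i, fun n => congrFun (x.2 n) i⟩

/-- The point `p₀ = (1⁻, 1⁻, …) ∈ Σ`. -/
noncomputable def basePt {r : ℕ} (m : Fin r → ℕ) : SigmaProd m :=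
  ⟨fun _ => onePt r, fun _ => funext fun _ => one_pow _⟩

/-!
The iterate `fⁿ` acts on the `i`-th coordinate of the torus by `z ↦ z ^ (mᵢ ^ n)`, a covering
map of the circle. Restricted to `[0, k]` and rescaled to `[0, 1]`, the lifts `δ_γ`, `δ_ζ` lie
over the `k`-fold repetitions `t ↦ γ (fract (k t))` and `t ↦ ζ (fract (k t))`. Repeating a
homotopy from `γ` to `ζ` periodically gives a homotopy rel endpoints between these (it is
continuous because it is constant at `1⁻` at both ends of every period). The homotopy lifting
property, applied coordinatewise, lifts it to a homotopy rel endpoints between the restricted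
lifts, which in particular end at the same point.
-/

open unitInterval

namespace Path

variable {X : Type*} [TopologicalSpace X] {x : X}

@[simps]
noncomputable def loopRepeat (γ : Path x x) (k : ℕ) : C(I, X) where
  toFun t := γ (Set.projIcc 0 1 zero_le_one (Int.fract (k * t)))
  continuous_toFun :=
    (ContinuousOn.comp_fract'' γ.continuous_extend.continuousOn (by simp)).comp (by fun_prop)

noncomputable def Homotopy.loopRepeat {γ ζ : Path x x} (H : γ.Homotopy ζ) (k : ℕ) :
    (γ.loopRepeat k).HomotopyRel (ζ.loopRepeat k) {0, 1} where
  toFun p := H (p.1, Set.projIcc 0 1 zero_le_one (Int.fract (k * p.2)))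
  continuous_toFun :=
    ContinuousOn.comp_fract (f := fun (p : I × I) (u : ℝ) => H (p.1, Set.projIcc 0 1 _ u))
      (H.continuous.comp
        (continuous_fst.fst.prodMk (continuous_projIcc.comp continuous_snd))).continuousOn
      (by fun_prop) fun p => by simp
  map_zero_left t := by simp
  map_one_left t := by simp
  prop' s t ht := by
    rcases ht with rfl | rfl <;> simp

theorem Homotopic.loopRepeat {γ ζ : Path x x} (h : γ.Homotopic ζ) (k : ℕ) :
    (γ.loopRepeat k).HomotopicRel (ζ.loopRepeat k) {0, 1} :=
  Nonempty.map (·.loopRepeat k) h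

end Path

theorem ContinuousMap.HomotopicRel.lift_pi {ι A : Type*} {E X : ι → Type*} [TopologicalSpace A]
    [PreconnectedSpace A] [∀ i, TopologicalSpace (E i)] [∀ i, TopologicalSpace (X i)]
    {p : ∀ i, E i → X i} (hp : ∀ i, IsCoveringMap (p i))
    {f₀ f₁ : C(A, ∀ i, E i)} {g₀ g₁ : C(A, ∀ i, X i)} {S : Set A}
    (h₀ : ∀ a i, p i (f₀ a i) = g₀ a i) (h₁ : ∀ a i, p i (f₁ a i) = g₁ a i)
    (he : ∃ a ∈ S, f₀ a = f₁ a) (hg : g₀.HomotopicRel g₁ S) : f₀.HomotopicRel f₁ S := by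
  obtain ⟨a, ha, hfa⟩ := he
  have coord (i : ι) :
      ((ContinuousMap.eval i).comp f₀).HomotopicRel ((ContinuousMap.eval i).comp f₁) S := by
    refine ((hp i).homotopicRel_iff_comp ⟨a, ha, congrFun hfa i⟩).2 ?_
    convert hg.comp_continuousMap (ContinuousMap.eval i) using 1 <;> ext b <;> simp [h₀, h₁]
  exact ⟨HomotopyRel.pi fun i => (coord i).some⟩

theorem fPow_iterate_apply {r : ℕ} (m : Fin r → ℕ) (n : ℕ) (z : Torus r) (i : Fin r) :
    (fPow m)^[n] z i = z i ^ (m i ^ n) := by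
  induction n generalizing z with
  | zero => simp
  | succ n ih => rw [Function.iterate_succ_apply, ih, fPow, ← pow_mul, ← pow_succ']

theorem pow_lift_eq_loopRepeat {r : ℕ} {m : Fin r → ℕ} {n : ℕ} {γ : Path (onePt r) (onePt r)}
    {δ : ℝ≥0 → Torus r} (hδ : ∀ t, (fPow m)^[n] (δ t) = loopExt γ t) (k : ℕ) (t : I)
    (i : Fin r) :
    δ ⟨k * t, mul_nonneg k.cast_nonneg t.2.1⟩ i ^ (m i ^ n) = γ.loopRepeat k t i := by
  rw [← fPow_iterate_apply, Path.loopRepeat_apply,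
    Set.projIcc_of_mem _ ⟨Int.fract_nonneg _, (Int.fract_lt_one _).le⟩]
  exact congrFun (hδ _) i

theorem lifts_of_homotopic_loops_general {r : ℕ} (m : Fin r → ℕ)
    (hm : ∀ i, 2 ≤ m i)
    (γ ζ : Path (onePt r) (onePt r)) (hγζ : γ.Homotopic ζ) (n : ℕ)
    (δγ δζ : ℝ≥0 → Torus r) (hcγ : Continuous δγ) (hcζ : Continuous δζ)
    (hγ0 : δγ 0 = onePt r) (hζ0 : δζ 0 = onePt r)
    (hγl : ∀ t, (fPow m)^[n] (δγ t) = loopExt γ t)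
    (hζl : ∀ t, (fPow m)^[n] (δζ t) = loopExt ζ t) :
    ∀ k : ℕ, δγ k = δζ k ∧
      Nonempty (ContinuousMap.HomotopyRel
        ⟨fun t : unitInterval => δγ ⟨(k : ℝ) * t, mul_nonneg (Nat.cast_nonneg k) t.2.1⟩,
          hcγ.comp ((continuous_const.mul continuous_subtype_val).subtype_mk _)⟩
        ⟨fun t : unitInterval => δζ ⟨(k : ℝ) * t, mul_nonneg (Nat.cast_nonneg k) t.2.1⟩,
          hcζ.comp ((continuous_const.mul continuous_subtype_val).subtype_mk _)⟩
        {0, 1}) := by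
  intro k
  have : ∀ i, NeZero (m i ^ n) := fun i => ⟨pow_ne_zero _ (by linarith [hm i])⟩
  refine (fun hH => ⟨?endpoint, hH⟩) ?homotopy
  case homotopy =>
    refine ContinuousMap.HomotopicRel.lift_pi
      (fun i => (Circle.isQuotientCoveringMap_npow (m i ^ n)).isCoveringMap)
      (pow_lift_eq_loopRepeat hγl k) (pow_lift_eq_loopRepeat hζl k)
      ⟨0, .inl rfl, ?_⟩ (hγζ.loopRepeat k)
    simp only [ContinuousMap.coe_mk, Set.Icc.coe_zero, mul_zero]
    exact hγ0.trans hζ0.symm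
  case endpoint =>
    have hend := ContinuousMap.HomotopicRel.fst_eq_snd hH (x := 1) (.inr rfl)
    simp only [ContinuousMap.coe_mk, Set.Icc.coe_one, mul_one] at hend
    exact hend

/-- **Lemma 2(f).** Lifts (through `fⁿ`, starting at `1⁻`) of homotopic loops agree at
every natural number, and their restrictions to `[0,k]` are homotopic rel endpoints. -/
theorem lifts_of_homotopic_loops {r : ℕ} (hr : 0 < r) (m : Fin r → ℕ)
    (hm : ∀ i, 2 ≤ m i) (hcop : ∀ i j, i ≠ j → Nat.Coprime (m i) (m j))
    (γ ζ : Path (onePt r) (onePt r)) (hγζ : γ.Homotopic ζ) (n : ℕ)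
    (δγ δζ : ℝ≥0 → Torus r) (hcγ : Continuous δγ) (hcζ : Continuous δζ)
    (hγ0 : δγ 0 = onePt r) (hζ0 : δζ 0 = onePt r)
    (hγl : ∀ t, (fPow m)^[n] (δγ t) = loopExt γ t)
    (hζl : ∀ t, (fPow m)^[n] (δζ t) = loopExt ζ t) :
    ∀ k : ℕ, δγ k = δζ k ∧
      Nonempty (ContinuousMap.HomotopyRel
        ⟨fun t : unitInterval => δγ ⟨(k : ℝ) * t, mul_nonneg (Nat.cast_nonneg k) t.2.1⟩,
          hcγ.comp ((continuous_const.mul continuous_subtype_val).subtype_mk _)⟩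
        ⟨fun t : unitInterval => δζ ⟨(k : ℝ) * t, mul_nonneg (Nat.cast_nonneg k) t.2.1⟩,
          hcζ.comp ((continuous_const.mul continuous_subtype_val).subtype_mk _)⟩
        {0, 1}) :=
  lifts_of_homotopic_loops_general m hm γ ζ hγζ n δγ δζ hcγ hcζ hγ0 hζ0 hγl hζl
end

section
/- Let k₁,…,k_r ∈ ℕ with each k_i ≥ 1, let g : T → T be g(z₁,…,z_r) = (z₁^{k₁},…,z_r^{k_r}), let γ : [0,1] → T be a loop at 1⁻, and let δ : [0,∞) → T be continuous with δ(0) = 1⁻ and g ∘ δ = γ*. Then the image of δ is a compact connected subset of T. -/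
/-!
Since `γ*` has period `1`, each quotient `δᵢ(t + 1) / δᵢ(t)` is a `kᵢ`-th root of unity. It depends
continuously on `t` in the connected half-line, so it is a constant `cᵢ`, and then
`δᵢ(t + kᵢ) = cᵢ ^ kᵢ * δᵢ(t) = δᵢ(t)`. Thus `δ` has period `∏ kᵢ`, and its image is the continuous
image of the compact interval `[0, ∏ kᵢ]`.
-/

open scoped Real NNReal

open Function Set

lemma Circle.finite_setOf_pow_eq_one {n : ℕ} (hn : 0 < n) : {z : Circle | z ^ n = 1}.Finite := by
  refine ((Polynomial.nthRootsFinset n (1 : ℂ)).finite_toSet.preimage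
    Circle.coe_injective.injOn).subset fun (z : Circle) (hz : z ^ n = 1) => ?_
  show (z : ℂ) ∈ Polynomial.nthRootsFinset n (1 : ℂ)
  rw [Polynomial.mem_nthRootsFinset hn, ← Circle.coe_pow, hz, Circle.coe_one]

theorem Circle.periodic_nsmul_of_periodic_pow {α : Type*} [AddMonoid α] [TopologicalSpace α]
    [ContinuousAdd α] [PreconnectedSpace α] {u : α → Circle} (hu : Continuous u) {n : ℕ}
    (hn : 0 < n) {p : α} (h : Periodic (fun t => u t ^ n) p) : Periodic u (n • p) := by
  set q : α → Circle := fun t => u (t + p) / u t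
  have hq_pow : ∀ t, q t ^ n = 1 := fun t => by simp only [q, div_pow, h t, div_self']
  -- `q` is a continuous map into the finite, hence discrete, set of `n`-th roots of unity.
  have hq_const : ∀ t, q t = q 0 := fun t =>
    isPreconnected_univ.constant_of_mapsTo (Circle.finite_setOf_pow_eq_one hn).isDiscrete
      (by fun_prop : Continuous q).continuousOn (fun t _ => hq_pow t) (mem_univ t) (mem_univ 0)
  have hstep : ∀ t, u (t + p) = q 0 * u t := fun t => by rw [← hq_const t, div_mul_cancel]
  have hshift : ∀ m : ℕ, ∀ t, u (t + m • p) = q 0 ^ m * u t := by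
    intro m
    induction m with
    | zero => simp
    | succ m ih => intro t; rw [succ_nsmul, ← add_assoc, hstep, ih, pow_succ', mul_assoc]
  intro t
  rw [hshift n t, hq_pow 0, one_mul]

theorem periodic_prod_nsmul_of_periodic_fPow {α : Type*} [AddMonoid α] [TopologicalSpace α]
    [ContinuousAdd α] [PreconnectedSpace α] {r : ℕ} {k : Fin r → ℕ} (hk : ∀ i, 1 ≤ k i)
    {δ : α → Torus r} (hδ : Continuous δ) {p : α} (h : Periodic (fun t => fPow k (δ t)) p) :
    Periodic δ ((∏ i, k i) • p) := fun t => funext fun i => by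
  obtain ⟨d, hd⟩ := Finset.dvd_prod_of_mem k (Finset.mem_univ i)
  have hi : Periodic (fun t => δ t i) (k i • p) :=
    Circle.periodic_nsmul_of_periodic_pow (by fun_prop) (hk i) fun t => congrFun (h t) i
  rw [hd, mul_nsmul]
  exact hi.nsmul d t

theorem Function.Periodic.image_Icc_zero_nnreal {X : Type*} {f : ℝ≥0 → X} {c : ℝ≥0}
    (h : Periodic f c) (hc : 0 < c) : f '' Icc 0 c = range f := by
  refine (image_subset_range _ _).antisymm (range_subset_iff.2 fun t => ?_)
  set n := ⌊t / c⌋₊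
  have hle : n * c ≤ t := (le_div_iff₀ hc).1 (Nat.floor_le zero_le)
  have hlt : t < (n + 1) * c := (div_lt_iff₀ hc).1 (Nat.lt_floor_add_one _)
  refine ⟨t - n * c, ⟨zero_le, ?_⟩, ?_⟩
  · rw [tsub_le_iff_right]
    exact (hlt.trans_eq (by ring)).le
  · rw [← h.nat_mul n (t - n * c), tsub_add_cancel_of_le hle]

theorem loopExt_periodic {r : ℕ} (γ : Path (onePt r) (onePt r)) : Periodic (loopExt γ) 1 := by
  intro t
  unfold loopExt
  congr 2
  push_cast
  exact Int.fract_add_one _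

theorem lift_image_compact_connected_general {r : ℕ} (k : Fin r → ℕ)
    (hk : ∀ i, 1 ≤ k i) (γ : Path (onePt r) (onePt r))
    (δ : ℝ≥0 → Torus r) (hδ : Continuous δ)
    (hlift : ∀ t, fPow k (δ t) = loopExt γ t) :
    IsCompact (Set.range δ) ∧ IsConnected (Set.range δ) := by
  have hper : Periodic δ ((∏ i, k i) • 1) :=
    periodic_prod_nsmul_of_periodic_fPow hk hδ (by simpa only [hlift] using loopExt_periodic γ)
  have hpos : 0 < ((∏ i, k i) • 1 : ℝ≥0) :=
    nsmul_pos one_pos (Finset.prod_pos fun i _ => hk i).ne'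
  rw [← hper.image_Icc_zero_nnreal hpos]
  exact ⟨isCompact_Icc.image hδ, (isConnected_Icc hpos.le).image δ hδ.continuousOn⟩

/-- **Property (c).** The image of the lift of `γ*` through
`g(z₁,…,z_r) = (z₁^{k₁},…,z_r^{k_r})` is a compact connected subset of the torus. -/
theorem lift_image_compact_connected {r : ℕ} (hr : 0 < r) (k : Fin r → ℕ)
    (hk : ∀ i, 1 ≤ k i) (γ : Path (onePt r) (onePt r))
    (δ : ℝ≥0 → Torus r) (hδ : Continuous δ) (hδ0 : δ 0 = onePt r)
    (hlift : ∀ t, fPow k (δ t) = loopExt γ t) :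
    IsCompact (Set.range δ) ∧ IsConnected (Set.range δ) :=
  lift_image_compact_connected_general k hk γ δ hδ hlift
end
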